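/- arXiv:1904.00061 — 2 statements merged into one kernel-verified Lean document; each statement's English description precedes it below -/
import Mathlib

section
/- Define c₋ᵢ⁺ = √2(e_{−2i,0} − e_{0,−2i+1}) and c₋ᵢ⁻ = √2(e_{0,−2i} − e_{−2i+1,0}) for i ∈ [1,n] as (4n+1)×(4n+1) complex matrices with indices in [−2n,2n]. Then the parafermion triple relation [[c₋ⱼ^ξ, c₋ₖ^η], c₋ₗ^ε] = |ε−η| δ_{kl} c₋ⱼ^ξ − |ε−ξ| δ_{jl} c₋ₖ^η holds for all j,k,l ∈ [1,n] and ξ,η,ε ∈ {+1,−1}, where the brackets are ordinary matrix commutators. -/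
open Matrix

/-- Index set `[-2n, 2n] ⊂ ℤ` for rows and columns. -/
abbrev Idx (n : ℕ) := {i : ℤ // i ∈ Finset.Icc (-(2 * (n : ℤ))) (2 * (n : ℤ))}

/-- Elementary matrix `e_{a,b}` with rows/columns indexed by `[-2n,2n]`. -/
def E (n : ℕ) (a b : ℤ) : Matrix (Idx n) (Idx n) ℂ :=
  Matrix.of fun i j => if i.1 = a ∧ j.1 = b then 1 else 0

/-- The parafermion operators `f_j^{±} = c_{-j}^{±}`:
`f_j^+ = √2 (e_{-2j,0} - e_{0,-2j+1})`, `f_j^- = √2 (e_{0,-2j} - e_{-2j+1,0})`. -/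
noncomputable def fOp (n : ℕ) (ξ j : ℤ) : Matrix (Idx n) (Idx n) ℂ :=
  if ξ = 1 then ((Real.sqrt 2 : ℝ) : ℂ) • (E n (-2 * j) 0 - E n 0 (-2 * j + 1))
  else ((Real.sqrt 2 : ℝ) : ℂ) • (E n 0 (-2 * j) - E n (-2 * j + 1) 0)

lemma Emul (n : ℕ) (a b c d : ℤ) :
    E n a b * E n c d =
      if b = c ∧ b ∈ Finset.Icc (-(2 * (n : ℤ))) (2 * (n : ℤ)) then E n a d else 0 := by
  ext i jj
  simp only [Matrix.mul_apply, E, Matrix.of_apply]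
  by_cases hbc : b = c ∧ b ∈ Finset.Icc (-(2 * (n : ℤ))) (2 * (n : ℤ))
  · obtain ⟨rfl, hb⟩ := hbc
    rw [if_pos ⟨rfl, hb⟩]
    rw [Finset.sum_eq_single (⟨b, hb⟩ : Idx n)]
    · simp only [Matrix.of_apply]
      by_cases h1 : i.1 = a <;> by_cases h2 : jj.1 = d <;> simp [h1, h2]
    · intro m _ hm
      have : m.1 ≠ b := fun h => hm (Subtype.ext h)
      simp [this]
    · simp
  · rw [if_neg hbc]
    simp only [Matrix.zero_apply]
    apply Finset.sum_eq_zero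
    intro m _
    by_cases h1 : m.1 = b
    · by_cases h2 : m.1 = c
      · exact absurd ⟨h1 ▸ h2, h1 ▸ m.2⟩ hbc
      · simp [h2]
    · simp [h1]

lemma L1 (a b : ℤ) : (-2*a = -2*b) ↔ a = b := by omega
lemma L2 (a b : ℤ) : (-2*a+1 = -2*b+1) ↔ a = b := by omega
lemma L3 (a b : ℤ) : ¬(-2*a = -2*b+1) := by omega
lemma L4 (a b : ℤ) : ¬(-2*a+1 = -2*b) := by omega
lemma L5 (a : ℤ) (h : 1 ≤ a) : ¬(-2*a = 0) := by omega
lemma L6 (a : ℤ) (h : 1 ≤ a) : ¬((0:ℤ) = -2*a) := by omega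
lemma L7 (a : ℤ) : ¬(-2*a+1 = 0) := by omega
lemma L8 (a : ℤ) : ¬((0:ℤ) = -2*a+1) := by omega
lemma P1 (a b : ℤ) : (-(2*a) = -(2*b)) ↔ a = b := by omega
lemma P2 (a b : ℤ) : (-(2*a)+1 = -(2*b)+1) ↔ a = b := by omega
lemma P3 (a b : ℤ) : ¬(-(2*a) = -(2*b)+1) := by omega
lemma P4 (a b : ℤ) : ¬(-(2*a)+1 = -(2*b)) := by omega
lemma P5 (a : ℤ) (h : 1 ≤ a) : ¬(-(2*a) = 0) := by omega
lemma P6 (a : ℤ) (h : 1 ≤ a) : ¬((0:ℤ) = -(2*a)) := by omega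
lemma P7 (a : ℤ) : ¬(-(2*a)+1 = 0) := by omega
lemma P8 (a : ℤ) : ¬((0:ℤ) = -(2*a)+1) := by omega

lemma hs : ((Real.sqrt 2 : ℝ) : ℂ) * ((Real.sqrt 2 : ℝ) : ℂ) = 2 := by
  norm_cast
  rw [Real.mul_self_sqrt] <;> norm_num


set_option maxHeartbeats 4000000 in
/-- the parafermion triple relations
`[[f_j^ξ, f_k^η], f_l^ε] = |ε−η| δ_{kl} f_j^ξ − |ε−ξ| δ_{jl} f_k^η`. -/
theorem stmt5 (n : ℕ) (j k l ξ η ε : ℤ)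
    (hj : 1 ≤ j ∧ j ≤ (n : ℤ)) (hk : 1 ≤ k ∧ k ≤ (n : ℤ)) (hl : 1 ≤ l ∧ l ≤ (n : ℤ))
    (hξ : ξ = 1 ∨ ξ = -1) (hη : η = 1 ∨ η = -1) (hε : ε = 1 ∨ ε = -1) :
    (fOp n ξ j * fOp n η k - fOp n η k * fOp n ξ j) * fOp n ε l -
      fOp n ε l * (fOp n ξ j * fOp n η k - fOp n η k * fOp n ξ j) =
    ((|ε - η| : ℤ) : ℂ) • (if k = l then fOp n ξ j else 0) -
      ((|ε - ξ| : ℤ) : ℂ) • (if j = l then fOp n η k else 0) := by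
  obtain ⟨hj1, hj2⟩ := hj
  obtain ⟨hk1, hk2⟩ := hk
  obtain ⟨hl1, hl2⟩ := hl
  have m0 : (0:ℤ) ∈ Finset.Icc (-(2 * (n : ℤ))) (2 * (n : ℤ)) := by simp only [Finset.mem_Icc]; omega
  have mj : (-2*j:ℤ) ∈ Finset.Icc (-(2 * (n : ℤ))) (2 * (n : ℤ)) := by simp only [Finset.mem_Icc]; omega
  have mj1 : (-2*j+1:ℤ) ∈ Finset.Icc (-(2 * (n : ℤ))) (2 * (n : ℤ)) := by simp only [Finset.mem_Icc]; omega
  have mk : (-2*k:ℤ) ∈ Finset.Icc (-(2 * (n : ℤ))) (2 * (n : ℤ)) := by simp only [Finset.mem_Icc]; omega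
  have mk1 : (-2*k+1:ℤ) ∈ Finset.Icc (-(2 * (n : ℤ))) (2 * (n : ℤ)) := by simp only [Finset.mem_Icc]; omega
  have ml : (-2*l:ℤ) ∈ Finset.Icc (-(2 * (n : ℤ))) (2 * (n : ℤ)) := by simp only [Finset.mem_Icc]; omega
  have ml1 : (-2*l+1:ℤ) ∈ Finset.Icc (-(2 * (n : ℤ))) (2 * (n : ℤ)) := by simp only [Finset.mem_Icc]; omega
  have pj : (-(2*j):ℤ) ∈ Finset.Icc (-(2 * (n : ℤ))) (2 * (n : ℤ)) := by simp only [Finset.mem_Icc]; omega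
  have pj1 : (-(2*j)+1:ℤ) ∈ Finset.Icc (-(2 * (n : ℤ))) (2 * (n : ℤ)) := by simp only [Finset.mem_Icc]; omega
  have pk : (-(2*k):ℤ) ∈ Finset.Icc (-(2 * (n : ℤ))) (2 * (n : ℤ)) := by simp only [Finset.mem_Icc]; omega
  have pk1 : (-(2*k)+1:ℤ) ∈ Finset.Icc (-(2 * (n : ℤ))) (2 * (n : ℤ)) := by simp only [Finset.mem_Icc]; omega
  have pl : (-(2*l):ℤ) ∈ Finset.Icc (-(2 * (n : ℤ))) (2 * (n : ℤ)) := by simp only [Finset.mem_Icc]; omega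
  have pl1 : (-(2*l)+1:ℤ) ∈ Finset.Icc (-(2 * (n : ℤ))) (2 * (n : ℤ)) := by simp only [Finset.mem_Icc]; omega
  rcases hξ with rfl | rfl <;> rcases hη with rfl | rfl <;> rcases hε with rfl | rfl <;>
    by_cases hjk : j = k <;> by_cases hjl : j = l <;> by_cases hkl : k = l <;>
    first
      | omega
      | (simp only [fOp, reduceIte, show ((1:ℤ) = 1) = True by simp,
            show ((-1:ℤ) = 1) = False by decide,
            show ((|(1:ℤ) - 1| : ℤ) : ℂ) = 0 by norm_num,
            show ((|(1:ℤ) - -1| : ℤ) : ℂ) = 2 by norm_num,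
            show ((|(-1:ℤ) - 1| : ℤ) : ℂ) = 2 by norm_num,
            show ((|(-1:ℤ) - -1| : ℤ) : ℂ) = 0 by norm_num,
            show ((|(0:ℤ)| : ℤ) : ℂ) = 0 by norm_num,
            show ((|(2:ℤ)| : ℤ) : ℂ) = 2 by norm_num,
            show ((|(-2:ℤ)| : ℤ) : ℂ) = 2 by norm_num,
            neg_mul, mul_neg, neg_neg, neg_smul, smul_neg,
            if_true, if_false, smul_sub, sub_mul, mul_sub, smul_mul_assoc, Matrix.mul_smul,
            Emul, m0, mj, mj1, mk, mk1, ml, ml1, and_true,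
            L1, L2, L3 j k, L3 j l, L3 k j, L3 k l, L3 l j, L3 l k, L3 j j, L3 k k, L3 l l,
            L4 j k, L4 j l, L4 k j, L4 k l, L4 l j, L4 l k, L4 j j, L4 k k, L4 l l,
            L5 j hj1, L5 k hk1, L5 l hl1, L6 j hj1, L6 k hk1, L6 l hl1,
            L7 j, L7 k, L7 l, L8 j, L8 k, L8 l,
            pj, pj1, pk, pk1, pl, pl1,
            P1, P2, P3 j k, P3 j l, P3 k j, P3 k l, P3 l j, P3 l k, P3 j j, P3 k k, P3 l l,
            P4 j k, P4 j l, P4 k j, P4 k l, P4 l j, P4 l k, P4 j j, P4 k k, P4 l l,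
            P5 j hj1, P5 k hk1, P5 l hl1, P6 j hj1, P6 k hk1, P6 l hl1,
            P7 j, P7 k, P7 l, P8 j, P8 k, P8 l,
            show (l = k) ↔ (k = l) from eq_comm, show (l = j) ↔ (j = l) from eq_comm,
            show (k = j) ↔ (j = k) from eq_comm,
            hjk, hjl, hkl, eq_self_iff_true, ite_true, ite_false,
            zero_mul, mul_zero, ite_mul, mul_ite, smul_zero, zero_smul, sub_zero, zero_sub,
            sub_self, smul_smul, hs]
         try module)
end

section
/- With fⱼ^± = c₋ⱼ^± and bₖ^± = cₖ^± defined as above by elementary matrices, the mixed relation [[fⱼ^ξ, bₖ^η], fₗ^ε] = −|ε−ξ| δ_{jl} bₖ^η holds for all j,l ∈ [1,n] (parafermion indices), k ∈ [1,n] (paraboson indices), and ξ,η,ε ∈ {+1,−1}. -/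
open Matrix

/-- Paraboson operators. -/
noncomputable def bOp (n : ℕ) (ξ i : ℤ) : Matrix (Idx n) (Idx n) ℂ :=
  if ξ = 1 then ((Real.sqrt 2 : ℝ) : ℂ) • (E n 0 (2 * i) + E n (2 * i - 1) 0)
  else ((Real.sqrt 2 : ℝ) : ℂ) • (E n 0 (2 * i - 1) - E n (2 * i) 0)

lemma E_mul_ne (n : ℕ) (a b c d : ℤ) (h : b ≠ c) : E n a b * E n c d = 0 := by
  ext i m
  simp only [Matrix.mul_apply, E, Matrix.of_apply, Matrix.zero_apply]
  apply Finset.sum_eq_zero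
  intro x _
  split_ifs with h1 h2
  · exact absurd (h1.2.symm.trans h2.1) h
  all_goals simp

lemma E_mul_eq (n : ℕ) (a b c d : ℤ) (hbc : b = c) (h1 : -(2*(n:ℤ)) ≤ b)
    (h2 : b ≤ 2*(n:ℤ)) : E n a b * E n c d = E n a d := by
  subst hbc
  ext i m
  simp only [Matrix.mul_apply, E, Matrix.of_apply]
  rw [Finset.sum_eq_single (⟨b, Finset.mem_Icc.mpr ⟨h1, h2⟩⟩ : Idx n)]
  · by_cases hia : i.1 = a <;> by_cases hmd : m.1 = d <;> simp [hia, hmd]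
  · intro x _ hx
    have : ¬ x.1 = b := fun hh => hx (Subtype.ext hh)
    simp [this]
  · intro h; exact absurd (Finset.mem_univ _) h

set_option maxHeartbeats 2000000 in
/-- the mixed relation `[[f_j^ξ, b_k^η], f_l^ε] = −|ε−ξ| δ_{jl} b_k^η`. -/
theorem stmt7 (n : ℕ) (j k l ξ η ε : ℤ)
    (hj : 1 ≤ j ∧ j ≤ (n : ℤ)) (hk : 1 ≤ k ∧ k ≤ (n : ℤ)) (hl : 1 ≤ l ∧ l ≤ (n : ℤ))
    (hξ : ξ = 1 ∨ ξ = -1) (hη : η = 1 ∨ η = -1) (hε : ε = 1 ∨ ε = -1) :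
    (fOp n ξ j * bOp n η k - bOp n η k * fOp n ξ j) * fOp n ε l -
      fOp n ε l * (fOp n ξ j * bOp n η k - bOp n η k * fOp n ξ j) =
    -(((|ε - ξ| : ℤ) : ℂ) • (if j = l then bOp n η k else 0)) := by
  obtain ⟨hj1, hj2⟩ := hj
  obtain ⟨hk1, hk2⟩ := hk
  obtain ⟨hl1, hl2⟩ := hl
  have ht : ((Real.sqrt 2 : ℝ) : ℂ) * ((Real.sqrt 2 : ℝ) : ℂ) = 2 := by
    rw [← Complex.ofReal_mul, Real.mul_self_sqrt (by norm_num)]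
    norm_num
  rcases hξ with rfl | rfl <;> rcases hη with rfl | rfl <;> rcases hε with rfl | rfl <;>
    [skip; skip; skip; skip; skip; skip; skip; skip] <;>
  · by_cases hjl : j = l
    case pos =>
      subst hjl
      rw [if_pos rfl]
      simp only [fOp, bOp, if_pos rfl, eq_self_iff_true, if_true,
        if_neg (by norm_num : ¬(-1 : ℤ) = 1)]
      simp only [smul_sub, smul_add, sub_mul, mul_sub, add_mul, mul_add, smul_mul_assoc,
        mul_smul_comm]
      simp (disch := omega) only [E_mul_eq, E_mul_ne, smul_zero, zero_sub, sub_zero,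
        zero_add, add_zero, neg_zero, neg_neg, smul_neg, mul_zero, zero_mul]
      try match_scalars <;> (norm_num; try linear_combination ((Real.sqrt 2 : ℝ) : ℂ) * ht)
    case neg =>
      rw [if_neg hjl]
      simp only [fOp, bOp, if_pos rfl, eq_self_iff_true, if_true,
        if_neg (by norm_num : ¬(-1 : ℤ) = 1)]
      simp only [smul_sub, smul_add, sub_mul, mul_sub, add_mul, mul_add, smul_mul_assoc,
        mul_smul_comm]
      simp (disch := omega) only [E_mul_eq, E_mul_ne, smul_zero, zero_sub, sub_zero,
        zero_add, add_zero, neg_zero, neg_neg, smul_neg, mul_zero, zero_mul]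
      try match_scalars <;> (norm_num; try linear_combination ((Real.sqrt 2 : ℝ) : ℂ) * ht)
end
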